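/- Let G be a simple signed graph on vertex set V and let U ⊆ V be such that G has no positive edge between U and V − U, and every vertex of U is adjacent to some positive edge. Then the fixed sets of G are exactly the sets S ∪ S' where S is a fixed set of G[U] and S' is a fixed set of G − U − 𝒩_G(S). -/

import Mathlib

/-- `S` is a fixed set of the conjunctive network of the simple signed graph
(positive edges `pos`, negative edges `neg`) induced on the vertex set `U`. -/
def FixedOn {V : Type*} (pos neg : V → V → Prop) (U S : Set V) : Prop :=
  S ⊆ U ∧ ∀ v ∈ U,
    (v ∈ S ↔ (∀ u ∈ U, pos u v → u ∈ S) ∧ (∀ u ∈ U, neg u v → u ∉ S))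

/-- `S` is a fixed set of the whole simple signed graph. -/
def IsFixedSet {V : Type*} (pos neg : V → V → Prop) (S : Set V) : Prop :=
  ∀ v, v ∈ S ↔ (∀ u, pos u v → u ∈ S) ∧ (∀ u, neg u v → u ∉ S)

/-- `𝒩(S)`: the union of `N(S)` with all connected components of the positive
subgraph meeting `N(S)`. -/
def calN {V : Type*} (pos neg : V → V → Prop) (S : Set V) : Set V :=
  {v | ∃ w, (∃ u ∈ S, pos u w ∨ neg u w) ∧ Relation.ReflTransGen pos w v}

/-!
A fixed set `T` is closed under positive edges in both directions, and `U` is a union of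
components of the positive subgraph without isolated vertices. So whether a vertex of `U` lies in
`T` is decided by any of its positive neighbours, which all lie in `U`, and `T ∩ U` is fixed in
`G[U]`. A vertex of `𝒩(T ∩ U)` outside `U` is joined by a positive path to a negative neighbour of
`T ∩ U`, which is outside `T`, so it is not in `T` either. The remaining vertices receive no
positive edge from `U ∪ 𝒩(T ∩ U)` and no negative edge from its part in `T`, so on them fixedness
in `G` and in `G − U − 𝒩(T ∩ U)` agree. The converse goes through the same three cases.
-/

def IsFixedAt {V : Type*} (pos neg : V → V → Prop) (T : Set V) (v : V) : Prop :=
  v ∈ T ↔ (∀ u, pos u v → u ∈ T) ∧ (∀ u, neg u v → u ∉ T)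

theorem Relation.ReflTransGen.mem_of_mem {α : Type*} {r : α → α → Prop} {A : Set α} {x y : α}
    (hA : ∀ x ∈ A, ∀ y, r x y → y ∈ A) (h : Relation.ReflTransGen r x y) (hx : x ∈ A) :
    y ∈ A := by
  induction h with
  | refl => exact hx
  | tail _ hr ih => exact hA _ ih _ hr

section

variable {V : Type*} {pos neg : V → V → Prop} {U S S' T A : Set V} {u v : V}

theorem mem_calN_of_neg (hu : u ∈ S) (h : neg u v) : v ∈ calN pos neg S :=
  ⟨v, ⟨u, hu, Or.inr h⟩, .refl⟩

theorem mem_calN_of_pos (hu : u ∈ calN pos neg S) (h : pos u v) : v ∈ calN pos neg S :=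
  let ⟨w, hw, hwu⟩ := hu
  ⟨w, hw, hwu.tail h⟩

theorem mem_compl_union_calN_of_pos (hU : ∀ u ∈ U, ∀ v, pos u v → v ∈ U)
    (hv : v ∈ (U ∪ calN pos neg S)ᶜ) (h : pos u v) : u ∈ (U ∪ calN pos neg S)ᶜ := by
  rintro (hu | hu)
  exacts [hv (Or.inl (hU u hu v h)), hv (Or.inr (mem_calN_of_pos hu h))]

theorem isFixedAt_iff_of_restrict (hv : v ∈ A) (hTS : ∀ u ∈ A, u ∈ T ↔ u ∈ S)
    (hpos : ∀ u, pos u v → u ∈ A) (hneg : ∀ u ∈ T, neg u v → u ∈ A) :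
    IsFixedAt pos neg T v ↔
      (v ∈ S ↔ (∀ u ∈ A, pos u v → u ∈ S) ∧ (∀ u ∈ A, neg u v → u ∉ S)) := by
  have hP : (∀ u, pos u v → u ∈ T) ↔ (∀ u ∈ A, pos u v → u ∈ S) :=
    ⟨fun h u hu hp => (hTS u hu).1 (h u hp),
      fun h u hp => (hTS u (hpos u hp)).2 (h u (hpos u hp) hp)⟩
  have hN : (∀ u, neg u v → u ∉ T) ↔ (∀ u ∈ A, neg u v → u ∉ S) :=
    ⟨fun h u hu hn huS => h u hn ((hTS u hu).2 huS),
      fun h u hn huT => h u (hneg u huT hn) hn ((hTS u (hneg u huT hn)).1 huT)⟩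
  rw [IsFixedAt, hTS v hv, hP, hN]

namespace IsFixedSet

theorem mem_of_pos (hps : Symmetric pos) (hT : IsFixedSet pos neg T) (hu : u ∈ T)
    (h : pos u v) : v ∈ T :=
  ((hT u).1 hu).1 v (hps h)

theorem mem_of_pos_of_mem (hT : IsFixedSet pos neg T) (hv : v ∈ T) (h : pos u v) : u ∈ T :=
  ((hT v).1 hv).1 u h

theorem inter_calN_inter_subset (hU : ∀ u ∈ U, ∀ v, pos u v → v ∈ U)
    (hT : IsFixedSet pos neg T) : T ∩ calN pos neg (T ∩ U) ⊆ U := by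
  rintro v ⟨hvT, w, ⟨u, ⟨huT, huU⟩, h⟩, hwv⟩
  have hwT : w ∈ T := by
    by_contra hw
    exact hwv.mem_of_mem (A := Tᶜ) (fun x hx y hxy hy => hx (hT.mem_of_pos_of_mem hy hxy)) hw hvT
  rcases h with h | h
  · exact hwv.mem_of_mem hU (hU u huU w h)
  · exact (((hT w).1 hwT).2 u h huT).elim

theorem fixedOn_inter (hps : Symmetric pos) (hU : ∀ u ∈ U, ∀ v, pos u v → v ∈ U)
    (hUpos : ∀ v ∈ U, ∃ u, pos u v) (hT : IsFixedSet pos neg T) :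
    FixedOn pos neg U (T ∩ U) := by
  refine ⟨Set.inter_subset_right, fun v hv => ⟨fun ⟨hvT, _⟩ => ?_, fun ⟨hP, _⟩ => ?_⟩⟩
  · obtain ⟨hP, hN⟩ := (hT v).1 hvT
    exact ⟨fun u hu h => ⟨hP u h, hu⟩, fun u _ hn hu => hN u hn hu.1⟩
  · obtain ⟨u, h⟩ := hUpos v hv
    exact ⟨hT.mem_of_pos hps (hP u (hU v hv u (hps h)) h).1 h, hv⟩

theorem fixedOn_diff (hU : ∀ u ∈ U, ∀ v, pos u v → v ∈ U) (hT : IsFixedSet pos neg T) :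
    FixedOn pos neg (U ∪ calN pos neg (T ∩ U))ᶜ (T \ U) := by
  have hsub := inter_calN_inter_subset hU hT
  refine ⟨fun v ⟨hvT, hvU⟩ => ?_, fun v hv => (isFixedAt_iff_of_restrict hv ?_ ?_ ?_).1 (hT v)⟩
  · rintro (h | h)
    exacts [hvU h, hvU (hsub ⟨hvT, h⟩)]
  · exact fun u hu => ⟨fun h => ⟨h, fun h' => hu (Or.inl h')⟩, And.left⟩
  · exact fun u h => mem_compl_union_calN_of_pos hU hv h
  · intro u huT hn
    have huU : u ∉ U := fun hu => hv (Or.inr (mem_calN_of_neg ⟨huT, hu⟩ hn))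
    rintro (hu | hu)
    exacts [huU hu, huU (hsub ⟨huT, hu⟩)]

end IsFixedSet

theorem isFixedAt_union_of_mem (hps : Symmetric pos) (hns : Symmetric neg)
    (hU : ∀ u ∈ U, ∀ v, pos u v → v ∈ U) (hS : FixedOn pos neg U S)
    (hS' : FixedOn pos neg (U ∪ calN pos neg S)ᶜ S') (hv : v ∈ U) :
    IsFixedAt pos neg (S ∪ S') v := by
  constructor
  · rintro (hvS | hvS')
    · obtain ⟨hP, hN⟩ := (hS.2 v hv).1 hvS
      refine ⟨fun u h => Or.inl (hP u (hU v hv u (hps h)) h), ?_⟩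
      rintro u hn (huS | huS')
      · exact hN u (hS.1 huS) hn huS
      · exact hS'.1 huS' (Or.inr (mem_calN_of_neg hvS (hns hn)))
    · exact (hS'.1 hvS' (Or.inl hv)).elim
  · rintro ⟨hP, hN⟩
    refine Or.inl ((hS.2 v hv).2 ⟨fun u hu h => ?_, fun u _ hn huS => hN u hn (Or.inl huS)⟩)
    exact (hP u h).resolve_right fun huS' => hS'.1 huS' (Or.inl hu)

theorem isFixedAt_of_mem_calN (hU : ∀ u ∈ U, ∀ v, pos u v → v ∈ U) (hSU : S ⊆ U)
    (hST : S ⊆ T) (hTN : T ∩ calN pos neg S ⊆ U) (hv : v ∈ calN pos neg S) (hvU : v ∉ U) :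
    IsFixedAt pos neg T v := by
  refine iff_of_false (fun h => hvU (hTN ⟨h, hv⟩)) ?_
  rintro ⟨hP, hN⟩
  obtain ⟨w, ⟨u, hu, hu'⟩, hwv⟩ := hv
  rcases hwv.cases_tail with rfl | ⟨x, hwx, hxv⟩
  · rcases hu' with h | h
    · exact hvU (hU u (hSU hu) _ h)
    · exact hN u h (hST hu)
  · exact hvU (hU x (hTN ⟨hP x hxv, w, ⟨u, hu, hu'⟩, hwx⟩) v hxv)

theorem FixedOn.isFixedSet_union (hps : Symmetric pos) (hns : Symmetric neg)
    (hU : ∀ u ∈ U, ∀ v, pos u v → v ∈ U) (hS : FixedOn pos neg U S)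
    (hS' : FixedOn pos neg (U ∪ calN pos neg S)ᶜ S') : IsFixedSet pos neg (S ∪ S') := by
  intro v
  by_cases hvU : v ∈ U
  · exact isFixedAt_union_of_mem hps hns hU hS hS' hvU
  by_cases hvN : v ∈ calN pos neg S
  · refine isFixedAt_of_mem_calN hU hS.1 Set.subset_union_left ?_ hvN hvU
    rintro x ⟨hx | hx, hxN⟩
    exacts [hS.1 hx, (hS'.1 hx (Or.inr hxN)).elim]
  have hvW : v ∈ (U ∪ calN pos neg S)ᶜ := by
    rintro (h | h)
    exacts [hvU h, hvN h]
  refine (isFixedAt_iff_of_restrict hvW (fun u hu => ?_)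
    (fun u h => mem_compl_union_calN_of_pos hU hvW h) ?_).2 (hS'.2 v hvW)
  · exact ⟨fun h => h.resolve_left fun huS => hu (Or.inl (hS.1 huS)), Or.inr⟩
  · rintro u (huS | huS') hn
    exacts [(hvN (mem_calN_of_neg huS hn)).elim, hS'.1 huS']

end

theorem stmt6_general {V : Type*} (pos neg : V → V → Prop)
    (hps : Symmetric pos) (hns : Symmetric neg)
    (U : Set V) (hU : ∀ u ∈ U, ∀ v, v ∉ U → ¬ pos u v)
    (hUpos : ∀ v ∈ U, ∃ u, pos u v) :
    ∀ T : Set V, IsFixedSet pos neg T ↔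
      ∃ S S' : Set V, FixedOn pos neg U S ∧
        FixedOn pos neg (U ∪ calN pos neg S)ᶜ S' ∧ T = S ∪ S' := by
  have hUclosed : ∀ u ∈ U, ∀ v, pos u v → v ∈ U := fun u hu v h =>
    by_contra fun hv => hU u hu v hv h
  intro T
  constructor
  · intro hT
    exact ⟨T ∩ U, T \ U, hT.fixedOn_inter hps hUclosed hUpos, hT.fixedOn_diff hUclosed,
      (Set.inter_union_sdiff T U).symm⟩
  · rintro ⟨S, S', hS, hS', rfl⟩
    exact hS.isFixedSet_union hps hns hUclosed hS'

/-- If there is no positive edge between `U` and its complement and every vertex of `U`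
is adjacent to some positive edge, then the fixed sets of `G` are exactly the sets
`S ∪ S'` with `S` a fixed set of `G[U]` and `S'` a fixed set of `G − U − 𝒩_G(S)`. -/
theorem stmt6 {V : Type*} [Fintype V] (pos neg : V → V → Prop)
    (hps : Symmetric pos) (hns : Symmetric neg)
    (hpi : ∀ v, ¬ pos v v) (hni : ∀ v, ¬ neg v v)
    (hd : ∀ u v, pos u v → ¬ neg u v)
    (U : Set V) (hU : ∀ u ∈ U, ∀ v, v ∉ U → ¬ pos u v)
    (hUpos : ∀ v ∈ U, ∃ u, pos u v) :
    ∀ T : Set V, IsFixedSet pos neg T ↔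
      ∃ S S' : Set V, FixedOn pos neg U S ∧
        FixedOn pos neg (U ∪ calN pos neg S)ᶜ S' ∧ T = S ∪ S' :=
  stmt6_general pos neg hps hns U hU hUpos
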